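/- Let φ : Σ → (−∞,0) and ψ : Σ → (0,∞) be locally Hölder, suppose the limit α_lim exists with 0 < α_lim < ∞, and suppose t_∞ is finite. Then the set Q = {q ∈ ℝ : T(q) = t̃(q)} is order-connected: whenever q, q′ ∈ Q and q ≤ r ≤ q′, also r ∈ Q. Consequently Q is either the empty set, a single point, an interval, a half-line, or all of ℝ. -/

import Mathlib

open Filter MeasureTheory Set Topology
open scoped ENNReal NNReal

namespace CMS

/-- The discrete σ-algebra on the alphabet of positive integers. -/
instance : MeasurableSpace ℕ+ := ⊤

/-- The full shift `ℕ^ℕ` on the alphabet of positive integers. -/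
abbrev ShiftSpace : Type := ℕ → ℕ+

/-- The left shift map `(σx)ᵢ = x_{i+1}`. -/
def shift (x : ShiftSpace) : ShiftSpace := fun i => x (i + 1)

/-- The word formed by the first `n` symbols of `x`. -/
def word (x : ShiftSpace) (n : ℕ) : List ℕ+ := List.ofFn fun i : Fin n => x i

/-- The cylinder set determined by a word. -/
def cylinder (w : List ℕ+) : Set ShiftSpace :=
  {y | ∀ i : Fin w.length, y i = w.get i}

/-- Birkhoff sum `Σ_{i<n} f(σⁱ x)`. -/
def birkhoff (f : ShiftSpace → ℝ) (n : ℕ) (x : ShiftSpace) : ℝ :=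
  ∑ i ∈ Finset.range n, f (shift^[i] x)

/-- `f` is locally Hölder: `Vₙ(f) ≤ C θⁿ` for all `n ≥ 1`. -/
def LocHolder (f : ShiftSpace → ℝ) : Prop :=
  ∃ C : ℝ, 0 < C ∧ ∃ θ : ℝ, θ ∈ Set.Ioo (0:ℝ) 1 ∧
    ∀ n : ℕ, 1 ≤ n → ∀ w : List ℕ+, w.length = n →
      ∀ x ∈ cylinder w, ∀ y ∈ cylinder w, |f x - f y| ≤ C * θ ^ n

/-- The `n`-th partition function `Zₙ(f)`, valued in `ℝ≥0∞`
(using `exp (sup ...) = sup (exp ...)`). -/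
noncomputable def Zfun (n : ℕ) (f : ShiftSpace → ℝ) : ℝ≥0∞ :=
  ∑' w : {w : List ℕ+ // w.length = n},
    ⨆ y ∈ cylinder w.1, ENNReal.ofReal (Real.exp (birkhoff f n y))

/-- The logarithm `ℝ≥0∞ → EReal`. -/
noncomputable def elog (x : ℝ≥0∞) : EReal :=
  if x = 0 then ⊥ else if x = ⊤ then ⊤ else ((Real.log x.toReal : ℝ) : EReal)

/-- Topological pressure `P(f) = lim (1/n) log Zₙ(f) ∈ [-∞,∞]`
(formalised via `limsup`). -/
noncomputable def pressure (f : ShiftSpace → ℝ) : EReal :=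
  Filter.limsup (fun n : ℕ => (((n : ℝ)⁻¹ : ℝ) : EReal) * elog (Zfun n f)) Filter.atTop

/-- The temperature function `T(q) = inf {t | P(qφ - tψ) ≤ 0}`. -/
noncomputable def Tfun (φ ψ : ShiftSpace → ℝ) (q : ℝ) : ℝ :=
  sInf {t : ℝ | pressure (fun x => q * φ x - t * ψ x) ≤ 0}

/-- `t̃(q) = inf {t | P(qφ - tψ) < ∞}`. -/
noncomputable def ttilde (φ ψ : ShiftSpace → ℝ) (q : ℝ) : ℝ :=
  sInf {t : ℝ | pressure (fun x => q * φ x - t * ψ x) < ⊤}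

/-- `Q = {q | T(q) = t̃(q)}`. -/
def Qset (φ ψ : ShiftSpace → ℝ) : Set ℝ := {q | Tfun φ ψ q = ttilde φ ψ q}

/-- The set `{t | P(-tψ) < ∞}` whose infimum is `t_∞`. -/
def tinfSet (ψ : ShiftSpace → ℝ) : Set ℝ := {t | pressure (fun x => -(t * ψ x)) < ⊤}

/-- `t_∞ = inf {t | P(-tψ) < ∞}`. -/
noncomputable def tinfty (ψ : ShiftSpace → ℝ) : ℝ := sInf (tinfSet ψ)

/-- The constant sequence `ī = (i,i,...)`. -/
def constSeq (i : ℕ+) : ShiftSpace := fun _ => i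

/-- `μ` is a (σ-invariant probability) Gibbs measure for `f`. -/
def IsGibbs (f : ShiftSpace → ℝ) (μ : Measure ShiftSpace) : Prop :=
  IsProbabilityMeasure μ ∧ μ.map shift = μ ∧
  ∃ P : ℝ, pressure f = ((P : ℝ) : EReal) ∧
    ∃ M : ℝ, 1 ≤ M ∧ ∀ n : ℕ, 1 ≤ n → ∀ w : List ℕ+, w.length = n → ∀ x ∈ cylinder w,
      ENNReal.ofReal (M⁻¹ * Real.exp (-(n : ℝ) * P + birkhoff f n x)) ≤ μ (cylinder w) ∧
      μ (cylinder w) ≤ ENNReal.ofReal (M * Real.exp (-(n : ℝ) * P + birkhoff f n x))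

/-- Diameter with respect to an explicitly given metric on the shift space. -/
noncomputable def diam' (m : MetricSpace ShiftSpace) (s : Set ShiftSpace) : ℝ :=
  @Metric.diam _ m.toPseudoMetricSpace s

/-- Ball with respect to an explicitly given metric on the shift space. -/
def ball' (m : MetricSpace ShiftSpace) (x : ShiftSpace) (r : ℝ) : Set ShiftSpace :=
  @Metric.ball _ m.toPseudoMetricSpace x r

/-- Distance function of an explicitly given metric. -/
noncomputable def dist' (m : MetricSpace ShiftSpace) : ShiftSpace → ShiftSpace → ℝ :=
  @dist _ m.toPseudoMetricSpace.toDist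

/-- The given metric induces the product topology on `ℕ^ℕ`. -/
def compatibleTopology (m : MetricSpace ShiftSpace) : Prop :=
  m.toPseudoMetricSpace.toUniformSpace.toTopologicalSpace
    = (inferInstance : TopologicalSpace ShiftSpace)

/-- `ψ` is a metric potential for the metric `m`. -/
def IsMetricPotential (m : MetricSpace ShiftSpace) (ψ : ShiftSpace → ℝ) : Prop :=
  LocHolder ψ ∧ (∀ x, 0 < ψ x) ∧
  ∃ C : ℝ, 0 < C ∧ ∀ x : ShiftSpace, ∀ n : ℕ, 1 ≤ n →
    C⁻¹ * ∏ j ∈ Finset.range n, Real.exp (-ψ (shift^[j] x)) ≤ diam' m (cylinder (word x n)) ∧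
    diam' m (cylinder (word x n)) ≤ C * ∏ j ∈ Finset.range n, Real.exp (-ψ (shift^[j] x))

/-- Hausdorff dimension in `(Σ, d)` for an explicitly given metric. -/
noncomputable def dimH' (m : MetricSpace ShiftSpace) (s : Set ShiftSpace) : ℝ≥0∞ :=
  @dimH _ (@MetricSpace.toEMetricSpace _ m) s

/-- `x` has symbolic dimension `a` w.r.t. the Gibbs measure `μ` and metric `m`. -/
def HasSymbDim (m : MetricSpace ShiftSpace) (μ : Measure ShiftSpace) (x : ShiftSpace)
    (a : ℝ) : Prop :=
  Tendsto (fun n : ℕ => Real.log ((μ (cylinder (word x n))).toReal)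
      / Real.log (diam' m (cylinder (word x n)))) atTop (nhds a)

/-- The level set `X_α^s`. -/
def Xs (m : MetricSpace ShiftSpace) (μ : Measure ShiftSpace) (a : ℝ) : Set ShiftSpace :=
  {x | HasSymbDim m μ x a}

/-- The multifractal spectrum `f_μ(α) = dim_H X_α^s`. -/
noncomputable def mfSpectrum (m : MetricSpace ShiftSpace) (μ : Measure ShiftSpace) (a : ℝ) : ℝ :=
  (dimH' m (Xs m μ a)).toReal

/-- `φ` and `ψ` are non-cohomologous (in the class of locally Hölder functions). -/
def NonCohomologous (φ ψ : ShiftSpace → ℝ) : Prop :=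
  ¬ ∃ u : ShiftSpace → ℝ, LocHolder u ∧ ∀ x, φ x - ψ x = u x - u (shift x)

/-! ### The Gauss map -/

/-- The Gauss map `G(x) = 1/x mod 1`. -/
noncomputable def gauss (x : ℝ) : ℝ := Int.fract x⁻¹

/-- The inverse branch `G_b(x) = 1/(x+b)`. -/
noncomputable def gaussInv (b : ℕ+) (x : ℝ) : ℝ := 1 / (x + ((b : ℕ) : ℝ))

/-- The continued-fraction cylinder `Δ(a₁,…,aₙ) = G_{a₁}∘⋯∘G_{aₙ}((0,1))`. -/
noncomputable def gaussCyl (L : List ℕ+) : Set ℝ :=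
  (L.foldr (fun b f => gaussInv b ∘ f) id) '' Set.Ioo (0:ℝ) 1

/-- The continued-fraction digits: `a_{i+1}(x) = ⌊1/(Gⁱx)⌋` (junk value `1` otherwise). -/
noncomputable def cfDigit (x : ℝ) (i : ℕ) : ℕ+ :=
  if h : 0 < ⌊(gauss^[i] x)⁻¹⌋ then ⟨(⌊(gauss^[i] x)⁻¹⌋).toNat, by omega⟩ else 1

/-- The value of a finite continued fraction `[a₁,…,aₙ]`. -/
noncomputable def cfValList (L : List ℕ+) : ℝ :=
  L.foldr (fun a r => 1 / (((a : ℕ) : ℝ) + r)) 0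

/-- The coding map `π : Σ → [0,1]`, sending a digit sequence to the value of its
continued fraction (as a limit of the finite truncations). -/
noncomputable def codingMap (x : ShiftSpace) : ℝ :=
  limUnder Filter.atTop fun n => cfValList (word x n)

/-- The Gauss geometric potential `ψ(x) = log |G'(π x)|`. -/
noncomputable def gaussPsi (x : ShiftSpace) : ℝ := Real.log |deriv gauss (codingMap x)|

/-- Index of first disagreement of two distinct sequences. -/
def firstDiff (x y : ShiftSpace) (h : x ≠ y) : ℕ :=
  Nat.find (p := fun i => x i ≠ y i)
    (by
      by_contra hc
      exact h (funext fun i => by by_contra hne; exact hc ⟨i, hne⟩))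

/-- `m` is the metric on `Σ` defined from the Gauss cylinders:
`d(x,y) = diam Δ(x₁,…,x_k)` with `k` the longest common initial block
(and `d(x,y) = 1` if `x₁ ≠ y₁`). -/
def IsGaussMetric (m : MetricSpace ShiftSpace) : Prop :=
  ∀ x y : ShiftSpace, ∀ h : x ≠ y,
    dist' m x y =
      if x 0 = y 0 then Metric.diam (gaussCyl (word x (firstDiff x y h))) else 1

/-! Since `φ(ī) / (-ψ(ī)) → α_lim` and the pressure of a locally Hölder potential is finite
exactly when its values at the constant sequences are exponentially summable, `P(qφ - tψ) < ∞`
holds for `t > t_∞ - q α_lim` and fails for `t < t_∞ - q α_lim`; hence `t̃(q) = t_∞ - q α_lim` is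
affine. The temperature function `T` is convex, by Hölder's inequality for the partition functions,
and finite, because the Birkhoff sums of `ψ` grow at least linearly; it lies above `t̃`. So `Q` is
the set where a convex function touches an affine minorant, which is convex. -/

end CMS

lemma PNat.cofinite_eq_atTop : (cofinite : Filter ℕ+) = atTop := by
  refine le_antisymm ?_ atTop_le_cofinite
  refine atTop_basis.ge_iff.2 fun N _ => ?_
  simpa only [mem_cofinite, compl_Ici] using Set.finite_Iio N

lemma tsum_ofReal_ne_top_iff_summable {ι : Type*} {g : ι → ℝ} (hg : ∀ i, 0 ≤ g i) :
    ∑' i, ENNReal.ofReal (g i) ≠ ⊤ ↔ Summable g := by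
  refine ⟨fun h => ?_, Summable.tsum_ofReal_ne_top⟩
  simpa only [ENNReal.toReal_ofReal (hg _)] using ENNReal.summable_toReal h

lemma ENNReal.exists_le_ofReal_exp {x : ℝ≥0∞} (hx : x ≠ ⊤) :
    ∃ L : ℝ, x ≤ ENNReal.ofReal (Real.exp L) :=
  ⟨x.toReal, by
    rw [← ENNReal.ofReal_toReal hx]
    exact ENNReal.ofReal_le_ofReal ((Real.add_one_le_exp _).trans' (by simp))⟩

lemma ENNReal.tsum_rpow_mul_rpow_le {ι : Type*} (u v : ι → ℝ≥0∞) {a b : ℝ} (ha : 0 ≤ a)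
    (hb : 0 ≤ b) (hab : a + b = 1) :
    ∑' i, u i ^ a * v i ^ b ≤ (∑' i, u i) ^ a * (∑' i, v i) ^ b := by
  let _ : MeasurableSpace ι := ⊤
  have _ : MeasurableSingletonClass ι := ⟨fun _ => trivial⟩
  simpa only [lintegral_count] using
    ENNReal.lintegral_mul_norm_pow_le (μ := (Measure.count : Measure ι))
    measurable_from_top.aemeasurable measurable_from_top.aemeasurable ha hb hab

lemma summable_exp_neg_mul_of_eventually_le {ι : Type*} {u b c : ι → ℝ} (hu : ∀ i, 0 ≤ u i)
    (hb : Summable fun i => Real.exp (-(b i * u i))) (hbc : ∀ᶠ i in cofinite, b i ≤ c i) :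
    Summable fun i => Real.exp (-(c i * u i)) :=
  hb.of_norm_bounded_eventually <| hbc.mono fun i hi => by
    rw [Real.norm_eq_abs, abs_of_pos (Real.exp_pos _)]
    exact Real.exp_le_exp.2 (neg_le_neg (mul_le_mul_of_nonneg_right hi (hu i)))

namespace CMS

lemma elog_eq_log (x : ℝ≥0∞) : elog x = ENNReal.log x := rfl

lemma iterate_shift_apply (k : ℕ) (y : ShiftSpace) (j : ℕ) : shift^[k] y j = y (j + k) := by
  induction k generalizing y with
  | zero => rfl
  | succ k ih => rw [Function.iterate_succ_apply, ih]; rfl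

lemma birkhoff_add (f : ShiftSpace → ℝ) (n m : ℕ) (y : ShiftSpace) :
    birkhoff f (n + m) y = birkhoff f n y + birkhoff f m (shift^[n] y) := by
  rw [birkhoff, Finset.sum_range_add]
  congr 1
  exact Finset.sum_congr rfl fun i _ => by rw [Nat.add_comm, Function.iterate_add_apply]

lemma birkhoff_one (f : ShiftSpace → ℝ) (y : ShiftSpace) : birkhoff f 1 y = f y := by
  simp [birkhoff]

lemma birkhoff_smul_add_smul (f g : ShiftSpace → ℝ) (a b : ℝ) (n : ℕ) (y : ShiftSpace) :
    birkhoff (fun x => a * f x + b * g x) n y = a * birkhoff f n y + b * birkhoff g n y := by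
  simp [birkhoff, Finset.mul_sum, Finset.sum_add_distrib]

lemma birkhoff_sub_smul (f g : ShiftSpace → ℝ) (c : ℝ) (n : ℕ) (y : ShiftSpace) :
    birkhoff (fun x => f x - c * g x) n y = birkhoff f n y - c * birkhoff g n y := by
  simp [birkhoff, Finset.mul_sum, Finset.sum_sub_distrib]

lemma birkhoff_nonneg {f : ShiftSpace → ℝ} (hf : ∀ x, 0 ≤ f x) (n : ℕ) (x : ShiftSpace) :
    0 ≤ birkhoff f n x :=
  Finset.sum_nonneg fun _ _ => hf _

lemma mem_cylinder_word {x y : ShiftSpace} {n : ℕ} (h : ∀ i < n, y i = x i) :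
    y ∈ cylinder (word x n) := by
  intro i
  rw [List.get_eq_getElem]
  simp only [word, List.getElem_ofFn]
  exact h i (by simpa [word] using i.isLt)

lemma self_mem_cylinder_word (x : ShiftSpace) (n : ℕ) : x ∈ cylinder (word x n) :=
  mem_cylinder_word fun _ _ => rfl

lemma word_length (x : ShiftSpace) (n : ℕ) : (word x n).length = n := by
  simp [word]

lemma mem_cylinder_singleton {a : ℕ+} {y : ShiftSpace} : y ∈ cylinder [a] ↔ y 0 = a :=
  ⟨fun h => h ⟨0, by simp⟩, fun h i => by fin_cases i; exact h⟩

lemma constSeq_mem_cylinder_singleton (a : ℕ+) : constSeq a ∈ cylinder [a] :=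
  mem_cylinder_singleton.2 rfl

lemma mem_cylinder_take {w : List ℕ+} {y : ShiftSpace} (n : ℕ) (hy : y ∈ cylinder w) :
    y ∈ cylinder (w.take n) := fun i => by
  simpa using hy ⟨i, by simpa using i.isLt.trans_le (by simp)⟩

lemma iterate_shift_mem_cylinder_drop {w : List ℕ+} {y : ShiftSpace} (n : ℕ)
    (hy : y ∈ cylinder w) : shift^[n] y ∈ cylinder (w.drop n) := fun i => by
  have hi : n + (i : ℕ) < w.length := by have := i.isLt; simp only [List.length_drop] at this; omega
  simpa [iterate_shift_apply, Nat.add_comm] using hy ⟨n + i, hi⟩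

def cons (a : ℕ+) (x : ShiftSpace) : ShiftSpace
  | 0 => a
  | j + 1 => x j

lemma shift_cons (a : ℕ+) (x : ShiftSpace) : shift (cons a x) = x := rfl

lemma cons_mem_cylinder_cons {a : ℕ+} {w : List ℕ+} {x : ShiftSpace} (hx : x ∈ cylinder w) :
    cons a x ∈ cylinder (a :: w) := by
  rintro ⟨_ | j, hj⟩
  · rfl
  · exact hx ⟨j, by simpa using hj⟩

namespace LocHolder

variable {f g : ShiftSpace → ℝ}

lemma const_mul (hf : LocHolder f) (c : ℝ) : LocHolder fun x => c * f x := by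
  obtain ⟨C, hC, θ, hθ, H⟩ := hf
  refine ⟨(|c| + 1) * C, by positivity, θ, hθ, fun n hn w hw x hx y hy => ?_⟩
  rw [← mul_sub, abs_mul, mul_assoc]
  exact mul_le_mul (by linarith) (H n hn w hw x hx y hy) (abs_nonneg _) (by positivity)

lemma sub (hf : LocHolder f) (hg : LocHolder g) : LocHolder fun x => f x - g x := by
  obtain ⟨C, hC, θ, hθ, H⟩ := hf
  obtain ⟨C', hC', θ', hθ', H'⟩ := hg
  refine ⟨C + C', by positivity, max θ θ', ⟨lt_max_of_lt_left hθ.1, max_lt hθ.2 hθ'.2⟩,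
    fun n hn w hw x hx y hy => ?_⟩
  have hpow : θ ^ n ≤ max θ θ' ^ n := pow_le_pow_left₀ hθ.1.le (le_max_left _ _) n
  have hpow' : θ' ^ n ≤ max θ θ' ^ n := pow_le_pow_left₀ hθ'.1.le (le_max_right _ _) n
  calc |f x - g x - (f y - g y)| ≤ |f x - f y| + |g x - g y| := by
        rw [show f x - g x - (f y - g y) = (f x - f y) - (g x - g y) by ring]
        exact abs_sub _ _
    _ ≤ C * θ ^ n + C' * θ' ^ n := add_le_add (H n hn w hw x hx y hy) (H' n hn w hw x hx y hy)
    _ ≤ (C + C') * max θ θ' ^ n := by nlinarith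

lemma potential {φ ψ : ShiftSpace → ℝ} (hφ : LocHolder φ) (hψ : LocHolder ψ) (q t : ℝ) :
    LocHolder fun x => q * φ x - t * ψ x :=
  (hφ.const_mul q).sub (hψ.const_mul t)

lemma abs_sub_constSeq_le (hf : LocHolder f) :
    ∃ V, ∀ a : ℕ+, ∀ x ∈ cylinder [a], |f x - f (constSeq a)| ≤ V := by
  obtain ⟨C, -, θ, -, H⟩ := hf
  exact ⟨C * θ ^ 1, fun a x hx => H 1 le_rfl [a] rfl x hx _ (constSeq_mem_cylinder_singleton a)⟩

lemma exists_abs_sub_lt (hf : LocHolder f) {ε : ℝ} (hε : 0 < ε) : ∃ n ≥ 1,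
    ∀ w : List ℕ+, w.length = n → ∀ x ∈ cylinder w, ∀ y ∈ cylinder w, |f x - f y| < ε := by
  obtain ⟨C, -, θ, hθ, H⟩ := hf
  have hsmall : Tendsto (fun n : ℕ => C * θ ^ n) atTop (𝓝 0) := by
    simpa using (tendsto_pow_atTop_nhds_zero_of_lt_one hθ.1.le hθ.2).const_mul C
  obtain ⟨n, hn, hn1⟩ := ((hsmall.eventually_lt_const hε).and (eventually_ge_atTop 1)).exists
  exact ⟨n, hn1, fun w hw x hx y hy => (H n hn1 w hw x hx y hy).trans_lt hn⟩

lemma continuous (hf : LocHolder f) : Continuous f := by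
  refine continuous_iff_continuousAt.2 fun x => Metric.tendsto_nhds.2 fun ε hε => ?_
  obtain ⟨n, -, hn⟩ := hf.exists_abs_sub_lt hε
  have hopen : IsOpen ((Set.Iio n).pi fun i => ({x i} : Set ℕ+)) :=
    isOpen_set_pi (Set.finite_Iio n) fun _ _ => isOpen_discrete _
  filter_upwards [hopen.mem_nhds fun _ _ => rfl] with y hy
  exact hn _ (word_length x n) y (mem_cylinder_word fun i hi => hy i hi) x
    (self_mem_cylinder_word x n)

end LocHolder

section PartitionFunction

variable {f g : ShiftSpace → ℝ} {n : ℕ}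

noncomputable def cylinderWeight (f : ShiftSpace → ℝ) (n : ℕ)
    (w : {w : List ℕ+ // w.length = n}) : ℝ≥0∞ :=
  ⨆ y ∈ cylinder w.1, ENNReal.ofReal (Real.exp (birkhoff f n y))

lemma Zfun_eq_tsum_cylinderWeight (f : ShiftSpace → ℝ) (n : ℕ) :
    Zfun n f = ∑' w, cylinderWeight f n w := rfl

lemma ofReal_exp_birkhoff_le_cylinderWeight {w : {w : List ℕ+ // w.length = n}}
    {y : ShiftSpace} (hy : y ∈ cylinder w.1) :
    ENNReal.ofReal (Real.exp (birkhoff f n y)) ≤ cylinderWeight f n w :=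
  le_iSup₂_of_le y hy le_rfl

def wordsAppendEquiv (n m : ℕ) : {w : List ℕ+ // w.length = n + m} ≃
    ({w : List ℕ+ // w.length = n} × {w : List ℕ+ // w.length = m}) where
  toFun w := (⟨w.1.take n, by simp [w.2]⟩, ⟨w.1.drop n, by simp [w.2]⟩)
  invFun p := ⟨p.1.1 ++ p.2.1, by simp [p.1.2, p.2.2]⟩
  left_inv w := Subtype.ext (List.take_append_drop n w.1)
  right_inv := by
    rintro ⟨⟨a, rfl⟩, ⟨b, hb⟩⟩
    simp

lemma Zfun_add_le_mul (f : ShiftSpace → ℝ) (n m : ℕ) :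
    Zfun (n + m) f ≤ Zfun n f * Zfun m f := by
  let e := wordsAppendEquiv n m
  have hsplit : ∀ w, cylinderWeight f (n + m) w ≤
      cylinderWeight f n (e w).1 * cylinderWeight f m (e w).2 := fun w =>
    iSup₂_le fun y hy => by
      rw [birkhoff_add, Real.exp_add, ENNReal.ofReal_mul (Real.exp_nonneg _)]
      exact mul_le_mul' (ofReal_exp_birkhoff_le_cylinderWeight (mem_cylinder_take n hy))
        (ofReal_exp_birkhoff_le_cylinderWeight (iterate_shift_mem_cylinder_drop n hy))
  calc Zfun (n + m) f ≤ ∑' w, cylinderWeight f n (e w).1 * cylinderWeight f m (e w).2 :=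
        ENNReal.tsum_le_tsum hsplit
    _ = ∑' p : {w : List ℕ+ // w.length = n} × {w : List ℕ+ // w.length = m},
          cylinderWeight f n p.1 * cylinderWeight f m p.2 :=
        e.tsum_eq fun p => cylinderWeight f n p.1 * cylinderWeight f m p.2
    _ = Zfun n f * Zfun m f := by
        rw [ENNReal.tsum_prod (f := fun a b => cylinderWeight f n a * cylinderWeight f m b),
          Zfun_eq_tsum_cylinderWeight, Zfun_eq_tsum_cylinderWeight,
          ← ENNReal.tsum_mul_right]
        exact tsum_congr fun _ => ENNReal.tsum_mul_left

lemma Zfun_le_pow (f : ShiftSpace → ℝ) (hn : 1 ≤ n) : Zfun n f ≤ Zfun 1 f ^ n := by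
  induction n, hn using Nat.le_induction with
  | base => simp
  | succ n _ ih => calc
      Zfun (n + 1) f ≤ Zfun n f * Zfun 1 f := Zfun_add_le_mul f n 1
      _ ≤ Zfun 1 f ^ n * Zfun 1 f := mul_le_mul_left ih _
      _ = Zfun 1 f ^ (n + 1) := (pow_succ _ _).symm

def wordsOneEquiv : {w : List ℕ+ // w.length = 1} ≃ ℕ+ where
  toFun w := w.1.headI
  invFun a := ⟨[a], rfl⟩
  left_inv := by
    rintro ⟨_ | ⟨a, _ | _⟩, h⟩ <;> simp at h ⊢
  right_inv _ := rfl

lemma Zfun_one_le_mul_tsum {V : ℝ} (hV : ∀ a : ℕ+, ∀ x ∈ cylinder [a], f x ≤ f (constSeq a) + V) :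
    Zfun 1 f ≤ ENNReal.ofReal (Real.exp V) *
      ∑' a : ℕ+, ENNReal.ofReal (Real.exp (f (constSeq a))) := by
  rw [Zfun_eq_tsum_cylinderWeight, ← wordsOneEquiv.symm.tsum_eq, ← ENNReal.tsum_mul_left]
  refine ENNReal.tsum_le_tsum fun a => iSup₂_le fun y hy => ?_
  rw [← ENNReal.ofReal_mul (Real.exp_nonneg V), ← Real.exp_add, birkhoff_one]
  exact ENNReal.ofReal_le_ofReal (Real.exp_le_exp.2 (by linarith [hV a y hy]))

lemma mul_tsum_cons_le_Zfun (f : ShiftSpace → ℝ) (x : ShiftSpace) (k : ℕ) :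
    ENNReal.ofReal (Real.exp (birkhoff f k x)) *
      ∑' a : ℕ+, ENNReal.ofReal (Real.exp (f (cons a x))) ≤ Zfun (k + 1) f := by
  let ι : ℕ+ → {w : List ℕ+ // w.length = k + 1} := fun a => ⟨a :: word x k, by simp [word]⟩
  have hι : Function.Injective ι := fun a b hab => by
    simpa [ι] using congrArg (fun w => w.1.headI) hab
  rw [← ENNReal.tsum_mul_left]
  refine (ENNReal.tsum_le_tsum fun a => ?_).trans
    (ENNReal.tsum_comp_le_tsum_of_injective hι (cylinderWeight f (k + 1)))
  refine le_trans (le_of_eq ?_) (ofReal_exp_birkhoff_le_cylinderWeight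
    (cons_mem_cylinder_cons (a := a) (self_mem_cylinder_word x k)))
  rw [Nat.add_comm, birkhoff_add, birkhoff_one, Function.iterate_one, shift_cons, add_comm,
    Real.exp_add, ENNReal.ofReal_mul (Real.exp_nonneg _)]

lemma Zfun_le_mul_of_birkhoff_le {C : ℝ} (h : ∀ y, birkhoff f n y ≤ C + birkhoff g n y) :
    Zfun n f ≤ ENNReal.ofReal (Real.exp C) * Zfun n g := by
  rw [Zfun_eq_tsum_cylinderWeight, Zfun_eq_tsum_cylinderWeight, ← ENNReal.tsum_mul_left]
  refine ENNReal.tsum_le_tsum fun w => iSup₂_le fun y hy => ?_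
  calc ENNReal.ofReal (Real.exp (birkhoff f n y))
      ≤ ENNReal.ofReal (Real.exp C) * ENNReal.ofReal (Real.exp (birkhoff g n y)) := by
        rw [← ENNReal.ofReal_mul (Real.exp_nonneg _), ← Real.exp_add]
        exact ENNReal.ofReal_le_ofReal (Real.exp_le_exp.2 (h y))
    _ ≤ _ := mul_le_mul_right (ofReal_exp_birkhoff_le_cylinderWeight hy) _

lemma Zfun_smul_add_smul_le (f g : ShiftSpace → ℝ) {a b : ℝ} (ha : 0 ≤ a) (hb : 0 ≤ b)
    (hab : a + b = 1) (n : ℕ) :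
    Zfun n (fun x => a * f x + b * g x) ≤ Zfun n f ^ a * Zfun n g ^ b := by
  refine (ENNReal.tsum_le_tsum fun w => iSup₂_le fun y hy => ?_).trans
    (ENNReal.tsum_rpow_mul_rpow_le _ _ ha hb hab)
  rw [birkhoff_smul_add_smul, Real.exp_add, ENNReal.ofReal_mul (Real.exp_nonneg _),
    mul_comm a, mul_comm b, Real.exp_mul, Real.exp_mul,
    ← ENNReal.ofReal_rpow_of_pos (Real.exp_pos _), ← ENNReal.ofReal_rpow_of_pos (Real.exp_pos _)]
  exact mul_le_mul' (ENNReal.rpow_le_rpow (ofReal_exp_birkhoff_le_cylinderWeight hy) ha)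
    (ENNReal.rpow_le_rpow (ofReal_exp_birkhoff_le_cylinderWeight hy) hb)

end PartitionFunction

section Pressure

variable {f g : ShiftSpace → ℝ}

lemma inv_mul_elog_le_iff {n : ℕ} (hn : 1 ≤ n) (x : ℝ≥0∞) (c : ℝ) :
    (((n : ℝ)⁻¹ : ℝ) : EReal) * elog x ≤ c ↔ x ≤ ENNReal.ofReal (Real.exp (n * c)) := by
  have hn' : (0 : EReal) < (n : ℝ) := by exact_mod_cast hn
  rw [← ENNReal.log_le_log_iff, ENNReal.log_ofReal_of_pos (Real.exp_pos _), Real.log_exp,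
    ← elog_eq_log, EReal.coe_inv, mul_comm, ← div_eq_mul_inv,
    EReal.div_le_iff_le_mul hn' (EReal.coe_ne_top _), EReal.coe_mul]

lemma pressure_le_of_Zfun_le {C c : ℝ}
    (h : ∀ᶠ n in atTop, Zfun n f ≤ ENNReal.ofReal (Real.exp (C + n * c))) : pressure f ≤ c := by
  refine EReal.le_of_forall_lt_iff_le.1 fun z hz => limsup_le_of_le (by isBoundedDefault) ?_
  have hcz : 0 < z - c := sub_pos.2 (by exact_mod_cast hz)
  filter_upwards [h, eventually_ge_atTop 1, eventually_ge_atTop ⌈C / (z - c)⌉₊]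
    with n hZ hn hCn
  refine (inv_mul_elog_le_iff hn _ z).2 (hZ.trans (ENNReal.ofReal_le_ofReal
    (Real.exp_le_exp.2 ?_)))
  have := (div_le_iff₀ hcz).1 ((Nat.le_ceil _).trans (Nat.cast_le.2 hCn))
  linarith

lemma eventually_Zfun_le_of_pressure_lt {c : ℝ} (h : pressure f < c) :
    ∀ᶠ n in atTop, Zfun n f ≤ ENNReal.ofReal (Real.exp (n * c)) := by
  filter_upwards [eventually_lt_of_limsup_lt h, eventually_ge_atTop 1] with n hlt hn
  exact (inv_mul_elog_le_iff hn _ c).1 hlt.le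

lemma pressure_le_of_Zfun_one_le {L : ℝ} (h : Zfun 1 f ≤ ENNReal.ofReal (Real.exp L)) :
    pressure f ≤ L := by
  refine pressure_le_of_Zfun_le (C := 0) ((eventually_ge_atTop 1).mono fun n hn => ?_)
  calc Zfun n f ≤ Zfun 1 f ^ n := Zfun_le_pow f hn
    _ ≤ ENNReal.ofReal (Real.exp L) ^ n := pow_le_pow_left' h n
    _ = ENNReal.ofReal (Real.exp (0 + n * L)) := by
      rw [← ENNReal.ofReal_pow (Real.exp_nonneg _), ← Real.exp_nat_mul, zero_add]

lemma pressure_eq_top_of_tsum_cons_eq_top (x : ShiftSpace)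
    (h : ∑' a : ℕ+, ENNReal.ofReal (Real.exp (f (cons a x))) = ⊤) : pressure f = ⊤ := by
  have hZ : ∀ᶠ n : ℕ in atTop, (((n : ℝ)⁻¹ : ℝ) : EReal) * elog (Zfun n f) = ⊤ := by
    filter_upwards [eventually_ge_atTop 1] with n hn
    obtain ⟨k, rfl⟩ := Nat.exists_eq_add_of_le' hn
    have hZtop : Zfun (k + 1) f = ⊤ := top_le_iff.1 <| (mul_tsum_cons_le_Zfun f x k).trans' <| by
      rw [h, ENNReal.mul_top (by simpa using Real.exp_pos _)]
    have hpos : (0 : EReal) < (((k + 1 : ℕ) : ℝ)⁻¹ : ℝ) := by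
      exact_mod_cast inv_pos.2 (Nat.cast_pos.2 k.succ_pos)
    rw [hZtop, elog_eq_log, ENNReal.log_top, EReal.mul_top_of_pos hpos]
  rw [pressure, limsup_congr hZ, limsup_const]

lemma Zfun_one_ne_top_of_summable (hf : LocHolder f)
    (hsum : Summable fun a : ℕ+ => Real.exp (f (constSeq a))) : Zfun 1 f ≠ ⊤ := by
  obtain ⟨V, hV⟩ := hf.abs_sub_constSeq_le
  refine ne_top_of_le_ne_top (ENNReal.mul_ne_top ENNReal.ofReal_ne_top hsum.tsum_ofReal_ne_top)
    (Zfun_one_le_mul_tsum (V := V) fun a x hx => ?_)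
  linarith [(abs_le.1 (hV a x hx)).2]

lemma pressure_lt_top_iff_summable (hf : LocHolder f) :
    pressure f < ⊤ ↔ Summable fun a : ℕ+ => Real.exp (f (constSeq a)) := by
  refine ⟨fun hP => ?_, fun hsum => ?_⟩
  · -- `f(ā) ≤ f(a 1 1 1 …) + V`, and these points give `Zfun n f = ⊤` for every `n ≥ 1`.
    obtain ⟨V, hV⟩ := hf.abs_sub_constSeq_le
    rw [← tsum_ofReal_ne_top_iff_summable fun _ => (Real.exp_pos _).le]
    intro hsum
    have hcons : ∑' a : ℕ+, ENNReal.ofReal (Real.exp (f (constSeq a))) ≤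
        ENNReal.ofReal (Real.exp V) *
          ∑' a : ℕ+, ENNReal.ofReal (Real.exp (f (cons a (constSeq 1)))) := by
      rw [← ENNReal.tsum_mul_left]
      refine ENNReal.tsum_le_tsum fun a => ?_
      rw [← ENNReal.ofReal_mul (Real.exp_nonneg _), ← Real.exp_add]
      have := abs_le.1 (hV a (cons a (constSeq 1)) (mem_cylinder_singleton.2 rfl))
      exact ENNReal.ofReal_le_ofReal (Real.exp_le_exp.2 (by linarith))
    rw [hsum, top_le_iff, ENNReal.mul_eq_top] at hcons
    refine hP.ne (pressure_eq_top_of_tsum_cons_eq_top (constSeq 1) ?_)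
    exact hcons.resolve_right (fun h => ENNReal.ofReal_ne_top h.1) |>.2
  · obtain ⟨L, hL⟩ := ENNReal.exists_le_ofReal_exp (Zfun_one_ne_top_of_summable hf hsum)
    exact (pressure_le_of_Zfun_one_le hL).trans_lt (EReal.coe_lt_top L)

lemma Zfun_one_ne_top_of_pressure_lt_top (hf : LocHolder f) (hP : pressure f < ⊤) :
    Zfun 1 f ≠ ⊤ :=
  Zfun_one_ne_top_of_summable hf ((pressure_lt_top_iff_summable hf).1 hP)

lemma exists_pressure_sub_smul_nonpos {δ W : ℝ} (hδ : 0 < δ)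
    (hg : ∀ n x, δ * n - W ≤ birkhoff g n x) (hf : Zfun 1 f ≠ ⊤) :
    ∃ s, pressure (fun x => f x - s * g x) ≤ 0 := by
  -- If `Zfun 1 f ≤ exp L` then `P(f - s g) ≤ L - s δ`.
  obtain ⟨L, hL⟩ := ENNReal.exists_le_ofReal_exp hf
  set s := max 0 (L / δ)
  have hs : 0 ≤ s := le_max_left _ _
  have hLs : L ≤ s * δ := (div_le_iff₀ hδ).1 (le_max_right _ _)
  refine ⟨s, (pressure_le_of_Zfun_le (C := s * W) (c := L - s * δ)
    ((eventually_ge_atTop 1).mono fun n hn => ?_)).trans (by exact_mod_cast sub_nonpos.2 hLs)⟩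
  calc Zfun n (fun x => f x - s * g x)
      ≤ ENNReal.ofReal (Real.exp (s * W - s * δ * n)) * Zfun n f :=
        Zfun_le_mul_of_birkhoff_le fun y => by
          rw [birkhoff_sub_smul]
          nlinarith [hg n y]
    _ ≤ ENNReal.ofReal (Real.exp (s * W - s * δ * n)) * ENNReal.ofReal (Real.exp L) ^ n :=
        mul_le_mul_right ((Zfun_le_pow f hn).trans (pow_le_pow_left' hL n)) _
    _ = ENNReal.ofReal (Real.exp (s * W + n * (L - s * δ))) := by
        rw [← ENNReal.ofReal_pow (Real.exp_nonneg _), ← Real.exp_nat_mul,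
          ← ENNReal.ofReal_mul (Real.exp_nonneg _), ← Real.exp_add]
        ring_nf

lemma pressure_smul_add_smul_le {a b c : ℝ} (ha : 0 ≤ a) (hb : 0 ≤ b) (hab : a + b = 1)
    (hf : pressure f ≤ c) (hg : pressure g ≤ c) :
    pressure (fun x => a * f x + b * g x) ≤ c := by
  refine EReal.le_of_forall_lt_iff_le.1 fun z hz => pressure_le_of_Zfun_le (C := 0) ?_
  filter_upwards [eventually_Zfun_le_of_pressure_lt (hf.trans_lt hz),
    eventually_Zfun_le_of_pressure_lt (hg.trans_lt hz)] with n hfn hgn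
  set E := ENNReal.ofReal (Real.exp (n * z))
  calc Zfun n (fun x => a * f x + b * g x) ≤ Zfun n f ^ a * Zfun n g ^ b :=
        Zfun_smul_add_smul_le f g ha hb hab n
    _ ≤ E ^ a * E ^ b := mul_le_mul' (ENNReal.rpow_le_rpow hfn ha) (ENNReal.rpow_le_rpow hgn hb)
    _ = ENNReal.ofReal (Real.exp (0 + n * z)) := by
      rw [← ENNReal.rpow_add _ _ (by simpa [E] using Real.exp_pos _) ENNReal.ofReal_ne_top, hab,
        ENNReal.rpow_one, zero_add]

end Pressure

section Potentials

variable {φ ψ : ShiftSpace → ℝ} {αlim : ℝ}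

lemma mem_tinfSet_iff (hψ : LocHolder ψ) (t : ℝ) :
    t ∈ tinfSet ψ ↔ Summable fun a : ℕ+ => Real.exp (-(t * ψ (constSeq a))) :=
  pressure_lt_top_iff_summable (by simpa only [neg_mul] using hψ.const_mul (-t))

lemma pressure_potential_lt_top_iff (hφ : LocHolder φ) (hψ : LocHolder ψ)
    (hψpos : ∀ x, 0 < ψ x) (q t : ℝ) :
    pressure (fun x => q * φ x - t * ψ x) < ⊤ ↔ Summable fun a : ℕ+ =>
      Real.exp (-((t + q * (φ (constSeq a) / -ψ (constSeq a))) * ψ (constSeq a))) := by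
  have hconst : ∀ a : ℕ+, q * φ (constSeq a) - t * ψ (constSeq a) =
      -((t + q * (φ (constSeq a) / -ψ (constSeq a))) * ψ (constSeq a)) := fun a => by
    have := (hψpos (constSeq a)).ne'
    field_simp
    ring
  simp only [pressure_lt_top_iff_summable (hφ.potential hψ q t), hconst]

variable (hφ : LocHolder φ) (hψ : LocHolder ψ) (hψpos : ∀ x, 0 < ψ x)
  (hαlim : Tendsto (fun a : ℕ+ => φ (constSeq a) / (-ψ (constSeq a))) atTop (𝓝 αlim))
include hφ hψ hψpos hαlim

lemma pressure_potential_lt_top (htinf : (tinfSet ψ).Nonempty) {q t : ℝ}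
    (ht : tinfty ψ - q * αlim < t) : pressure (fun x => q * φ x - t * ψ x) < ⊤ := by
  obtain ⟨s, hs, hst⟩ := exists_lt_of_csInf_lt htinf (show tinfty ψ < t + q * αlim by linarith)
  rw [pressure_potential_lt_top_iff hφ hψ hψpos]
  refine summable_exp_neg_mul_of_eventually_le (b := fun _ => s) (fun a => (hψpos _).le)
    ((mem_tinfSet_iff hψ s).1 hs) ?_
  rw [PNat.cofinite_eq_atTop]
  exact (tendsto_const_nhds.add (hαlim.const_mul q)).eventually (eventually_ge_nhds hst)

lemma tinfty_sub_le_of_pressure_lt_top (htinf : BddBelow (tinfSet ψ)) {q t : ℝ}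
    (h : pressure (fun x => q * φ x - t * ψ x) < ⊤) : tinfty ψ - q * αlim ≤ t := by
  by_contra! hlt
  obtain ⟨s, hts, hs⟩ := exists_between (show t + q * αlim < tinfty ψ by linarith)
  refine not_le.2 hs (csInf_le htinf ((mem_tinfSet_iff hψ s).2 ?_))
  rw [pressure_potential_lt_top_iff hφ hψ hψpos] at h
  refine summable_exp_neg_mul_of_eventually_le (c := fun _ => s) (fun a => (hψpos _).le) h ?_
  rw [PNat.cofinite_eq_atTop]
  exact (tendsto_const_nhds.add (hαlim.const_mul q)).eventually (eventually_le_nhds hts)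

lemma ttilde_eq (htinf₁ : (tinfSet ψ).Nonempty) (htinf₂ : BddBelow (tinfSet ψ)) (q : ℝ) :
    ttilde φ ψ q = tinfty ψ - q * αlim :=
  csInf_eq_of_forall_ge_of_forall_gt_exists_lt
    ⟨_, pressure_potential_lt_top hφ hψ hψpos hαlim htinf₁ (lt_add_one _)⟩
    (fun _ ht => tinfty_sub_le_of_pressure_lt_top hφ hψ hψpos hαlim htinf₂ ht)
    fun w hw => ⟨(tinfty ψ - q * αlim + w) / 2,
      pressure_potential_lt_top hφ hψ hψpos hαlim htinf₁ (by linarith), by linarith⟩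

end Potentials

lemma tendsto_constSeq_cofinite_atTop {ψ : ShiftSpace → ℝ} (hψ : LocHolder ψ)
    (hψpos : ∀ x, 0 < ψ x) (htinf : (tinfSet ψ).Nonempty) :
    Tendsto (fun a : ℕ+ => ψ (constSeq a)) cofinite atTop := by
  obtain ⟨s, hs⟩ := htinf
  have hbot : Tendsto (fun a : ℕ+ => -(s * ψ (constSeq a))) cofinite atBot :=
    Real.tendsto_exp_comp_nhds_zero.1 ((mem_tinfSet_iff hψ s).1 hs).tendsto_cofinite_zero
  have hs0 : 0 < s := by
    by_contra! hs0
    obtain ⟨a, ha⟩ := (hbot.eventually (eventually_lt_atBot 0)).exists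
    nlinarith [hψpos (constSeq a)]
  exact (tendsto_const_mul_atTop_of_pos hs0).1 (tendsto_neg_atBot_atTop.comp hbot |>.congr
    fun a => neg_neg _)

section BirkhoffLowerBound

variable {ψ : ShiftSpace → ℝ}

lemma exists_finset_one_le (hψ : LocHolder ψ)
    (hgrow : Tendsto (fun a : ℕ+ => ψ (constSeq a)) cofinite atTop) :
    ∃ F : Finset ℕ+, ∀ x : ShiftSpace, x 0 ∉ F → 1 ≤ ψ x := by
  obtain ⟨V, hV⟩ := hψ.abs_sub_constSeq_le
  have hfin := Filter.eventually_cofinite.1 (hgrow.eventually_ge_atTop (V + 1))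
  refine ⟨hfin.toFinset, fun x hx => ?_⟩
  have hbig : V + 1 ≤ ψ (constSeq (x 0)) := by simpa using hx
  linarith [(abs_le.1 (hV (x 0) x (mem_cylinder_singleton.2 rfl))).1]

/-- A sequence whose first `k` letters lie in `F` is `C θ ^ k`-close to the compact set `F^ℕ`,
on which `ψ` has a positive minimum. -/
lemma LocHolder.exists_pos_le_of_forall_lt_mem (hψ : LocHolder ψ) (hψpos : ∀ x, 0 < ψ x)
    {F : Set ℕ+} (hF : F.Finite) :
    ∃ δ > 0, ∃ k ≥ 1, ∀ x : ShiftSpace, (∀ p < k, x p ∈ F) → δ ≤ ψ x := by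
  rcases F.eq_empty_or_nonempty with rfl | ⟨a, ha⟩
  · exact ⟨1, one_pos, 1, le_rfl, fun x hx => absurd (hx 0 one_pos) (Set.notMem_empty _)⟩
  have hK : IsCompact (Set.univ.pi fun _ : ℕ => F) := isCompact_univ_pi fun _ => hF.isCompact
  obtain ⟨z, hzK, hzmin⟩ :=
    hK.exists_isMinOn ⟨fun _ => a, fun _ _ => ha⟩ hψ.continuous.continuousOn
  obtain ⟨k, hk, hvar⟩ := hψ.exists_abs_sub_lt (half_pos (hψpos z))
  refine ⟨ψ z / 2, half_pos (hψpos z), k, hk, fun x hx => ?_⟩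
  let y : ShiftSpace := fun j => if j < k then x j else a
  have hyK : y ∈ Set.univ.pi fun _ : ℕ => F := fun j _ => by
    by_cases hj : j < k <;> simp [y, hj, hx, ha]
  have hxy := abs_lt.1 (hvar _ (word_length x k) x (self_mem_cylinder_word x k) y
    (mem_cylinder_word fun j hj => by simp [y, hj]))
  linarith [isMinOn_iff.1 hzmin y hyK]

lemma exists_pos_le_birkhoff (hψ : LocHolder ψ) (hψpos : ∀ x, 0 < ψ x)
    (hgrow : Tendsto (fun a : ℕ+ => ψ (constSeq a)) cofinite atTop) :
    ∃ δ > 0, ∃ k ≥ 1, ∀ x, δ ≤ birkhoff ψ k x := by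
  obtain ⟨F, hF⟩ := exists_finset_one_le hψ hgrow
  obtain ⟨δ, hδ, k, hk, hδk⟩ := hψ.exists_pos_le_of_forall_lt_mem hψpos F.finite_toSet
  refine ⟨min δ 1, lt_min hδ one_pos, k, hk, fun x => ?_⟩
  obtain ⟨p, hp, hle⟩ : ∃ p < k, min δ 1 ≤ ψ (shift^[p] x) := by
    by_cases hx : ∀ p < k, x p ∈ F
    · exact ⟨0, hk, (min_le_left _ _).trans (hδk x hx)⟩
    · simp only [not_forall] at hx
      obtain ⟨p, hp, hpF⟩ := hx
      exact ⟨p, hp, (min_le_right _ _).trans (hF _ (by simpa [iterate_shift_apply] using hpF))⟩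
  exact hle.trans (Finset.single_le_sum (f := fun i => ψ (shift^[i] x))
    (fun _ _ => (hψpos _).le) (Finset.mem_range.2 hp))

lemma mul_div_le_birkhoff (hψ : ∀ x, 0 ≤ ψ x) {δ : ℝ} {k : ℕ}
    (hk : ∀ x, δ ≤ birkhoff ψ k x) (n : ℕ) (x : ShiftSpace) :
    δ * (n / k : ℕ) ≤ birkhoff ψ n x := by
  have hblocks : ∀ m x, δ * m ≤ birkhoff ψ (k * m) x := by
    intro m
    induction m with
    | zero => simp [birkhoff]
    | succ m ih =>
      intro x
      rw [Nat.mul_succ, birkhoff_add, Nat.cast_succ, mul_add_one]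
      exact add_le_add (ih x) (hk _)
  calc δ * (n / k : ℕ) ≤ birkhoff ψ (k * (n / k)) x := hblocks _ x
    _ ≤ birkhoff ψ n x := by
      conv_rhs => rw [← Nat.div_add_mod n k, birkhoff_add]
      exact le_add_of_nonneg_right (birkhoff_nonneg hψ _ _)

lemma exists_sub_le_birkhoff (hψ : LocHolder ψ) (hψpos : ∀ x, 0 < ψ x)
    (hgrow : Tendsto (fun a : ℕ+ => ψ (constSeq a)) cofinite atTop) :
    ∃ δ > 0, ∃ W, ∀ n x, δ * n - W ≤ birkhoff ψ n x := by
  obtain ⟨δ, hδ, k, hk, hδk⟩ := exists_pos_le_birkhoff hψ hψpos hgrow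
  have hk' : (0 : ℝ) < k := by exact_mod_cast hk
  refine ⟨δ / k, div_pos hδ hk', δ, fun n x => ?_⟩
  have hdiv : (n : ℝ) ≤ k * ((n / k : ℕ) + 1) := by
    have := Nat.lt_mul_div_succ n (show 0 < k by omega)
    exact_mod_cast this.le
  have hblock : δ / k * n ≤ δ * ((n / k : ℕ) + 1) := by
    rw [div_mul_eq_mul_div, div_le_iff₀ hk']
    nlinarith
  linarith [mul_div_le_birkhoff (fun x => (hψpos x).le) hδk n x]

end BirkhoffLowerBound

section Temperature

variable {φ ψ : ShiftSpace → ℝ} {αlim : ℝ} (hφ : LocHolder φ) (hψ : LocHolder ψ)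
  (hψpos : ∀ x, 0 < ψ x)
  (hαlim : Tendsto (fun a : ℕ+ => φ (constSeq a) / (-ψ (constSeq a))) atTop (𝓝 αlim))
  (htinf₁ : (tinfSet ψ).Nonempty)
include hφ hψ hψpos hαlim htinf₁

lemma exists_pressure_potential_nonpos (q : ℝ) :
    ∃ t, pressure (fun x => q * φ x - t * ψ x) ≤ 0 := by
  have hP := pressure_potential_lt_top hφ hψ hψpos hαlim htinf₁ (lt_add_one (tinfty ψ - q * αlim))
  obtain ⟨δ, hδ, W, hW⟩ :=
    exists_sub_le_birkhoff hψ hψpos (tendsto_constSeq_cofinite_atTop hψ hψpos htinf₁)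
  obtain ⟨s, hs⟩ := exists_pressure_sub_smul_nonpos hδ hW
    (Zfun_one_ne_top_of_pressure_lt_top (hφ.potential hψ q _) hP)
  exact ⟨tinfty ψ - q * αlim + 1 + s, by simpa only [add_mul, sub_sub] using hs⟩

variable (htinf₂ : BddBelow (tinfSet ψ))
include htinf₂

lemma tinfty_sub_le_Tfun (q : ℝ) : tinfty ψ - q * αlim ≤ Tfun φ ψ q :=
  le_csInf (exists_pressure_potential_nonpos hφ hψ hψpos hαlim htinf₁ q) fun _ ht =>
    tinfty_sub_le_of_pressure_lt_top hφ hψ hψpos hαlim htinf₂ (ht.trans_lt EReal.zero_lt_top)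

lemma convexOn_Tfun : ConvexOn ℝ univ (Tfun φ ψ) := by
  refine ⟨convex_univ, fun q _ q' _ a b ha hb hab => le_of_forall_pos_le_add fun ε hε => ?_⟩
  have hbdd : ∀ r, BddBelow {t : ℝ | pressure (fun x => r * φ x - t * ψ x) ≤ 0} := fun r =>
    ⟨_, fun _ ht =>
      tinfty_sub_le_of_pressure_lt_top hφ hψ hψpos hαlim htinf₂ (ht.trans_lt EReal.zero_lt_top)⟩
  have hnear : ∀ r, ∃ t, pressure (fun x => r * φ x - t * ψ x) ≤ 0 ∧ t < Tfun φ ψ r + ε :=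
    fun r => exists_lt_of_csInf_lt (exists_pressure_potential_nonpos hφ hψ hψpos hαlim htinf₁ r)
      (lt_add_of_pos_right _ hε)
  obtain ⟨t, ht, htq⟩ := hnear q
  obtain ⟨t', ht', htq'⟩ := hnear q'
  have hmem : pressure (fun x => (a • q + b • q') * φ x - (a * t + b * t') * ψ x) ≤ 0 := by
    have := pressure_smul_add_smul_le (c := 0) ha hb hab (mod_cast ht) (mod_cast ht')
    convert this using 3 with x
    · simp only [smul_eq_mul]
      ring
    · simp
  calc Tfun φ ψ (a • q + b • q') ≤ a * t + b * t' := csInf_le (hbdd _) hmem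
    _ ≤ a * (Tfun φ ψ q + ε) + b * (Tfun φ ψ q' + ε) := by gcongr
    _ = a • Tfun φ ψ q + b • Tfun φ ψ q' + ε := by
      simp only [smul_eq_mul]
      linear_combination ε * hab

lemma convex_Qset : Convex ℝ (Qset φ ψ) := by
  have httilde := ttilde_eq hφ hψ hψpos hαlim htinf₁ htinf₂
  intro q₁ (hq₁ : Tfun φ ψ q₁ = ttilde φ ψ q₁) q₂ (hq₂ : Tfun φ ψ q₂ = ttilde φ ψ q₂)
    a b ha hb hab
  refine (le_antisymm ?_ (tinfty_sub_le_Tfun hφ hψ hψpos hαlim htinf₁ htinf₂ _)).trans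
    (httilde _).symm
  calc Tfun φ ψ (a • q₁ + b • q₂) ≤ a • Tfun φ ψ q₁ + b • Tfun φ ψ q₂ :=
        (convexOn_Tfun hφ hψ hψpos hαlim htinf₁ htinf₂).2 trivial trivial ha hb hab
    _ = tinfty ψ - (a • q₁ + b • q₂) * αlim := by
        rw [hq₁, hq₂, httilde, httilde, smul_eq_mul, smul_eq_mul, smul_eq_mul, smul_eq_mul]
        linear_combination tinfty ψ * hab

end Temperature

theorem Qset_ordConnected_general
    (φ ψ : ShiftSpace → ℝ)
    (hφ : LocHolder φ)
    (hψ : LocHolder ψ) (hψpos : ∀ x, 0 < ψ x)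
    (αlim : ℝ)
    (hαlim : Tendsto (fun i : ℕ+ => φ (constSeq i) / (-ψ (constSeq i))) atTop (nhds αlim))
    (htinf₁ : (tinfSet ψ).Nonempty) (htinf₂ : BddBelow (tinfSet ψ))
    :
    ∀ q ∈ Qset φ ψ, ∀ q' ∈ Qset φ ψ, ∀ r : ℝ, q ≤ r → r ≤ q' → r ∈ Qset φ ψ := by
  intro q hq q' hq' r hqr hrq'
  exact (convex_Qset hφ hψ hψpos hαlim htinf₁ htinf₂).ordConnected.out hq hq' ⟨hqr, hrq'⟩

/-- Proposition 2.9: the set `Q = {q | T(q) = t̃(q)}` is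
order-connected. -/
theorem Qset_ordConnected
    (φ ψ : ShiftSpace → ℝ)
    (hφ : LocHolder φ) (hφneg : ∀ x, φ x < 0)
    (hψ : LocHolder ψ) (hψpos : ∀ x, 0 < ψ x)
    (αlim : ℝ)
    (hαlim : Tendsto (fun i : ℕ+ => φ (constSeq i) / (-ψ (constSeq i))) atTop (nhds αlim))
    (hαlim₀ : 0 < αlim)
    (htinf₁ : (tinfSet ψ).Nonempty) (htinf₂ : BddBelow (tinfSet ψ))
    :
    ∀ q ∈ Qset φ ψ, ∀ q' ∈ Qset φ ψ, ∀ r : ℝ, q ≤ r → r ≤ q' → r ∈ Qset φ ψ :=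
  Qset_ordConnected_general φ ψ hφ hψ hψpos αlim hαlim htinf₁ htinf₂

end CMS
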